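/- The forcing notion P defined in the paper is separative: for every condition p ∈ P there exist two incompatible extensions q, q' ≥ p. -/

import Mathlib

open FirstOrder

noncomputable section

/-- The language with a single binary relation symbol (membership). -/
inductive memRel : ℕ → Type
  | mem : memRel 2

/-- The language of set theory: one binary relation `∈`. -/
def memLang : Language := ⟨fun _ => Empty, memRel⟩

/-- `H κ` is the collection of sets of hereditary cardinality `< κ`. -/
def HSet (κ : Cardinal.{0}) : Set ZFSet.{0} :=
  {x | ZFSet.Hereditarily (fun y => Cardinal.mk y.toSet < Cardinal.lift.{1} κ) x}

/-- `H κ` as a structure in the language of set theory. -/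
noncomputable instance HSetStructure (κ : Cardinal.{0}) : memLang.Structure (HSet κ) where
  funMap {_n} f := Empty.elim f
  RelMap {_n} r := memRel.rec (motive := fun n _ => (Fin n → HSet κ) → Prop)
    (fun v => (v 0).1 ∈ (v 1).1) r

/-- `H_{ω₂}`. -/
abbrev Hω₂ : Set ZFSet.{0} := HSet (Cardinal.aleph 2)

/-- Countable elementary submodels of `H_{ω₂}` (before the `𝔐₀`-condition). -/
abbrev SqModel := memLang.ElementarySubstructure Hω₂

/-- The set of ordinals of a submodel, identified via von Neumann rank. -/
def ordTrace (M : Set Hω₂) : Set Ordinal.{0} :=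
  {o | ∃ x : Hω₂, x ∈ M ∧ x.1.IsOrdinal ∧ x.1.rank = o}

/-- `s` is a club (closed unbounded set) in the ordinal `a`. -/
def IsClubIn (s : Set Ordinal) (a : Ordinal) : Prop :=
  (∀ b ∈ s, b < a) ∧ (∀ b < a, ∃ c ∈ s, b < c) ∧
    (∀ b, b < a → 0 < b → b = sSup (s ∩ Set.Iio b) → b ∈ s)

/-- `b` is a limit point of the set of ordinals `s`. -/
def IsLimitPt (s : Set Ordinal) (b : Ordinal) : Prop :=
  0 < b ∧ b = sSup (s ∩ Set.Iio b)

/-- The order type of a set of ordinals. -/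
noncomputable def otp (s : Set Ordinal.{0}) : Ordinal.{1} :=
  Ordinal.type ((· < ·) : s → s → Prop)

/-- The ZFC set `x` codes the set of ordinals `s` (via von Neumann rank). -/
def CodesOrdSet (x : ZFSet) (s : Set Ordinal) : Prop :=
  (∀ y : ZFSet, y ∈ x → y.IsOrdinal) ∧
    ∀ o : Ordinal, o ∈ s ↔ ∃ y : ZFSet, y ∈ x ∧ y.rank = o

/-- The set of ordinals `s` is an element of the model `ℳ`. -/
def MemModelSet (ℳ : SqModel) (s : Set Ordinal) : Prop :=
  ∃ x : Hω₂, x ∈ ℳ ∧ CodesOrdSet x.1 s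

/-- The family `F` of sets of ordinals is an element of the model `ℳ`. -/
def MemModelFam (ℳ : SqModel) (F : Set (Set Ordinal)) : Prop :=
  ∃ x : Hω₂, x ∈ ℳ ∧ (∀ y : ZFSet, y ∈ x.1 → ∃ s, CodesOrdSet y s ∧ s ∈ F) ∧
    ∀ s ∈ F, ∃ y : ZFSet, y ∈ x.1 ∧ CodesOrdSet y s

/-- `ℳ ∈ 𝔐₀`: `ℳ` is countable and contains `ℰ_α` for each of its ordinals `α` of
cofinality `ω₁`. -/
def InM0 (E : Ordinal → Set (Set Ordinal)) (ℳ : SqModel) : Prop :=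
  (ℳ : Set Hω₂).Countable ∧
    ∀ α ∈ ordTrace (ℳ : Set Hω₂), α.cof = Cardinal.aleph 1 → MemModelFam ℳ (E α)

/-- The `T₁`-fence for `T₂` with common supremum `δ`. -/
noncomputable def fence (T₁ T₂ : Set Ordinal) (δ : Ordinal) : Set Ordinal :=
  {o | ∃ l ∈ T₂, δ < l ∧ l < sSup T₁ ∧ o = sInf (T₁ ∩ Set.Ici l)} ∪
    {sInf (T₁ ∩ Set.Ici δ)}

/-- Compatibility of two models (Definition 3.1 of the paper). -/
def ModCompat (ℳ₁ ℳ₂ : SqModel) : Prop :=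
  let T₁ := ordTrace (ℳ₁ : Set Hω₂)
  let T₂ := ordTrace (ℳ₂ : Set Hω₂)
  let δ := sSup (T₁ ∩ T₂)
  (δ ∈ T₁ → MemModelSet ℳ₁ (T₁ ∩ T₂)) ∧
  (δ ∉ T₁ → ∀ A : Hω₂, A ∈ ℳ₁ → Cardinal.mk A.1.toSet = Cardinal.aleph0 →
    (∀ y ∈ A.1, y.IsOrdinal ∧ y.rank < δ) → A ∈ ℳ₂) ∧
  (δ ∈ T₂ → MemModelSet ℳ₂ (T₁ ∩ T₂)) ∧
  (δ ∉ T₂ → ∀ A : Hω₂, A ∈ ℳ₂ → Cardinal.mk A.1.toSet = Cardinal.aleph0 →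
    (∀ y ∈ A.1, y.IsOrdinal ∧ y.rank < δ) → A ∈ ℳ₁) ∧
  (fence T₁ T₂ δ).Finite ∧ (fence T₂ T₁ δ).Finite

/-- Raw data of a condition of the forcing `P` (Definition 4.3): a finite partial
square-like sequence `F`, safeguards `S`, intervals `O` (coded by endpoint pairs
`(β', β]`), and side-condition models `Mods`. -/
structure SqCond where
  F : Ordinal → Option (Set Ordinal)
  S : Set Ordinal
  O : Set (Ordinal × Ordinal)
  Mods : Set SqModel

/-- The domain of the working part of a condition. -/
def SqCond.dom (p : SqCond) : Set Ordinal := {α | p.F α ≠ none}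

/-- Clauses (1)–(9) of Definition 4.3: `p` is a condition of the forcing `P`. -/
def SqValid (E : Ordinal → Set (Set Ordinal)) (p : SqCond) : Prop :=
  -- (1)
  p.dom.Finite ∧
  (∀ α s, p.F α = some s → (α ≠ 0 ∧ ∀ a < α, Order.succ a < α) ∧ α < (Cardinal.aleph 2).ord ∧
    IsClubIn s α ∧ otp s ≤ (Cardinal.aleph 1).ord ∧
    (α.cof = Cardinal.aleph 1 →
      ∃ C ∈ E α, ∃ β ∈ p.dom, β < α ∧ s = C ∩ Set.Ici β)) ∧
  -- (2)
  p.S ⊆ p.dom ∧ (∀ α ∈ p.dom, α.cof = Cardinal.aleph 1 → α ∈ p.S) ∧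
  -- (3)
  p.Mods.Finite ∧
  (∀ ℳ ∈ p.Mods, InM0 E ℳ ∧ sSup (ordTrace (ℳ : Set Hω₂)) ∈ p.S) ∧
  -- (4)
  (∀ α β s t, p.F α = some s → p.F β = some t → α ≠ β →
    ∀ μ, IsLimitPt s μ → IsLimitPt t μ → s ∩ Set.Iio μ = t ∩ Set.Iio μ) ∧
  -- (5)
  (∀ α s, p.F α = some s → ∀ σ ∈ p.S, σ < α → (s ∩ Set.Iio σ).Finite) ∧
  -- (6)
  (∀ α s, p.F α = some s → ∀ ℳ ∈ p.Mods,
    let T := ordTrace (ℳ : Set Hω₂)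
    -- (6a)
    (α ∈ T → MemModelSet ℳ s) ∧
    -- (6b)
    (((α ∉ T ∧ α < sSup T) ∨ (α ∈ T ∧ sSup (T ∩ Set.Iio α) < α)) →
      sInf (T ∩ Set.Ici α) ∈ p.S ∧ sSup (T ∩ Set.Iio α) ∈ p.dom) ∧
    -- (6c)
    ((α ∉ T ∧ sSup (T ∩ Set.Iio α) < α ∧ α < sSup T) →
      ((∃ β t, p.F β = some t ∧ α < β ∧ IsLimitPt t α ∧ s = t ∩ Set.Iio α) ∨
        ((∀ β t, p.F β = some t → α < β → ¬IsLimitPt t α) ∧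
          (s ∩ Set.Iio (sSup (T ∩ Set.Iio α))).Finite))) ∧
    -- (6d)
    ((α ∉ T ∧ sSup (T ∩ Set.Iio α) = α) →
      ((∃ β t, p.F β = some t ∧ α < β ∧ IsLimitPt t α ∧ s = t ∩ Set.Iio α) ∨
        ((∀ β t, p.F β = some t → α < β → ¬IsLimitPt t α) ∧
          otp s = Ordinal.omega0)))) ∧
  -- (7)
  p.O.Finite ∧
  (∀ i ∈ p.O, i.1 < i.2 ∧ i.2 < (Cardinal.aleph 2).ord ∧
    p.dom ∩ Set.Ioc i.1 i.2 = ∅) ∧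
  -- (8)
  (∀ i ∈ p.O, ∀ ℳ ∈ p.Mods,
    (i.1 ∈ ordTrace (ℳ : Set Hω₂) ∧ i.2 ∈ ordTrace (ℳ : Set Hω₂)) ∨
      ordTrace (ℳ : Set Hω₂) ∩ Set.Ioc i.1 i.2 = ∅) ∧
  -- (9)
  (∀ ℳ₁ ∈ p.Mods, ∀ ℳ₂ ∈ p.Mods, ModCompat ℳ₁ ℳ₂ ∧
    fence (ordTrace (ℳ₁ : Set Hω₂)) (ordTrace (ℳ₂ : Set Hω₂))
      (sSup (ordTrace (ℳ₁ : Set Hω₂) ∩ ordTrace (ℳ₂ : Set Hω₂))) ⊆ p.S ∧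
    fence (ordTrace (ℳ₂ : Set Hω₂)) (ordTrace (ℳ₁ : Set Hω₂))
      (sSup (ordTrace (ℳ₁ : Set Hω₂) ∩ ordTrace (ℳ₂ : Set Hω₂))) ⊆ p.S)

/-- The extension order on conditions: coordinatewise inclusion. -/
def SqLe (p q : SqCond) : Prop :=
  (∀ α s, p.F α = some s → q.F α = some s) ∧ p.S ⊆ q.S ∧ p.O ⊆ q.O ∧ p.Mods ⊆ q.Mods

/-- The fixed assignment `ℰ` of countable sets of clubs of order type `ω₁`. -/
def GoodE (E : Ordinal → Set (Set Ordinal)) : Prop :=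
  ∀ α, α < (Cardinal.aleph 2).ord → α.cof = Cardinal.aleph 1 →
    (E α).Countable ∧ (E α).Nonempty ∧
      ∀ C ∈ E α, IsClubIn C α ∧ otp C = (Cardinal.aleph 1).ord

/-!
Let `γ` be an ordinal below `ω₂` above every ordinal in the working part and the intervals of
`p`, and put `β = γ + ω`. Adding to the working part the entry `β ↦ [γ, β)`, respectively
`β ↦ (γ, β)`, yields two extensions of `p`. They are conditions because `β` has countable
cofinality and lies above everything mentioned in `p`, including the traces of its models
(whose suprema are safeguards), while the new clubs have all their limit points above `γ`,
beyond every old limit point. No condition extends both, as its working part would assign two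
different clubs to `β`.
-/

open Order

lemma bddAbove_of_countable {s : Set Ordinal.{0}} (hs : s.Countable) : BddAbove s := by
  have := hs.to_subtype
  exact Ordinal.bddAbove_of_small

lemma ordTrace_countable {M : Set Hω₂} (hM : M.Countable) : (ordTrace M).Countable := by
  refine (hM.image fun x : Hω₂ => x.1.rank).mono ?_
  rintro o ⟨x, hx, -, hr⟩
  exact ⟨x, hx, hr⟩

lemma exists_lt_forall_lt_of_finite {α : Type*} [LinearOrder α] [SuccOrder α] {o : α}
    (ho : IsSuccLimit o) {s : Set α} (hs : s.Finite) (hso : ∀ x ∈ s, x < o) :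
    ∃ γ < o, ∀ x ∈ s, x < γ := by
  induction s, hs using Set.Finite.induction_on with
  | empty =>
    obtain ⟨γ, hγ⟩ := not_isMin_iff.mp ho.not_isMin
    exact ⟨γ, hγ, by simp⟩
  | @insert a s _ _ ih =>
    obtain ⟨γ, hγo, hγ⟩ := ih fun x hx => hso x (Or.inr hx)
    have hao := hso a (Or.inl rfl)
    refine ⟨max γ (succ a), max_lt hγo (ho.succ_lt hao), ?_⟩
    rintro x (rfl | hx)
    · exact (lt_succ_of_not_isMax hao.not_isMax).trans_le (le_max_right _ _)
    · exact (hγ x hx).trans_le (le_max_left _ _)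

namespace IsLimitPt

variable {s : Set Ordinal} {α γ μ : Ordinal}

lemma exists_mem_lt (h : IsLimitPt s μ) : ∃ x ∈ s, x < μ := by
  by_contra! hs
  have hempty : s ∩ Set.Iio μ = ∅ :=
    Set.eq_empty_of_forall_notMem fun x hx => (hs x hx.1).not_gt hx.2
  have := h.2
  rw [hempty, csSup_empty, Ordinal.bot_eq_zero] at this
  exact h.1.ne' this

lemma lt_of_forall_le (h : IsLimitPt s μ) (hs : ∀ x ∈ s, γ ≤ x) : γ < μ :=
  let ⟨x, hx, hxμ⟩ := h.exists_mem_lt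
  (hs x hx).trans_lt hxμ

lemma le_of_forall_lt (h : IsLimitPt s μ) (hs : ∀ x ∈ s, x < α) : μ ≤ α := by
  rw [h.2]
  exact csSup_le' fun x hx => (hs x hx.1).le

end IsLimitPt

lemma isClubIn_Ico {γ β : Ordinal} (hγβ : γ < β) (hβ : IsSuccLimit β) :
    IsClubIn (Set.Ico γ β) β := by
  refine ⟨fun b hb => hb.2, fun b hb => ?_, fun b hb hb0 hsup => ?_⟩
  · exact ⟨max γ (succ b), ⟨le_max_left _ _, max_lt hγβ (hβ.succ_lt hb)⟩,
      (lt_succ b).trans_le (le_max_right _ _)⟩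
  · exact ⟨(IsLimitPt.lt_of_forall_le ⟨hb0, hsup⟩ fun x hx => hx.1).le, hb⟩

lemma countable_Ico_add_omega0 (γ : Ordinal) : (Set.Ico γ (γ + Ordinal.omega0)).Countable := by
  refine (Set.countable_range fun n : ℕ => γ + n).mono fun b hb => ?_
  obtain ⟨n, hn⟩ := Ordinal.lt_omega0.mp ((Ordinal.sub_lt_of_le hb.1).2 hb.2)
  exact ⟨n, by simp only [← hn, Ordinal.add_sub_cancel_of_le hb.1]⟩

lemma otp_lt_of_countable {s : Set Ordinal} (hs : s.Countable) :
    otp s < (Cardinal.aleph 1).ord := by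
  have := hs.to_subtype
  rw [Cardinal.lt_ord, otp, Ordinal.card_type]
  exact Cardinal.mk_le_aleph0.trans_lt Cardinal.aleph0_lt_aleph_one

namespace SqCond

def support (p : SqCond) : Set Ordinal := p.dom ∪ Prod.snd '' p.O

def addF (p : SqCond) (β : Ordinal) (s : Set Ordinal) : SqCond :=
  { p with F := Function.update p.F β (some s) }

variable {p r : SqCond} {α β : Ordinal} {s t : Set Ordinal}

lemma addF_F_eq_some :
    (p.addF β s).F α = some t ↔ α = β ∧ t = s ∨ α ≠ β ∧ p.F α = some t := by
  by_cases h : α = β <;> simp [addF, h, eq_comm]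

lemma dom_addF : (p.addF β s).dom = insert β p.dom := by
  ext α
  by_cases h : α = β <;> simp [dom, addF, Function.update_apply, h]

lemma dom_subset_addF : p.dom ⊆ (p.addF β s).dom :=
  dom_addF (p := p) ▸ Set.subset_insert β p.dom

lemma mem_dom (h : p.F α = some t) : α ∈ p.dom := by
  simp [dom, h]

lemma le_addF (hβ : β ∉ p.dom) : SqLe p (p.addF β s) := by
  refine ⟨fun α t ht => addF_F_eq_some.2 (Or.inr ⟨?_, ht⟩), subset_rfl, subset_rfl, subset_rfl⟩
  rintro rfl
  exact hβ (mem_dom ht)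

lemma F_eq_of_addF_le (h : SqLe (p.addF β s) r) : r.F β = some s :=
  h.1 β s (addF_F_eq_some.2 (Or.inl ⟨rfl, rfl⟩))

end SqCond

/-- Clause (6) of Definition 4.3 for the entry `(α, s)` of the working part and the model `ℳ`. -/
def ModelClause (p : SqCond) (α : Ordinal) (s : Set Ordinal) (ℳ : SqModel) : Prop :=
  let T := ordTrace (ℳ : Set Hω₂)
  (α ∈ T → MemModelSet ℳ s) ∧
  (((α ∉ T ∧ α < sSup T) ∨ (α ∈ T ∧ sSup (T ∩ Set.Iio α) < α)) →
    sInf (T ∩ Set.Ici α) ∈ p.S ∧ sSup (T ∩ Set.Iio α) ∈ p.dom) ∧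
  ((α ∉ T ∧ sSup (T ∩ Set.Iio α) < α ∧ α < sSup T) →
    ((∃ β t, p.F β = some t ∧ α < β ∧ IsLimitPt t α ∧ s = t ∩ Set.Iio α) ∨
      ((∀ β t, p.F β = some t → α < β → ¬IsLimitPt t α) ∧
        (s ∩ Set.Iio (sSup (T ∩ Set.Iio α))).Finite))) ∧
  ((α ∉ T ∧ sSup (T ∩ Set.Iio α) = α) →
    ((∃ β t, p.F β = some t ∧ α < β ∧ IsLimitPt t α ∧ s = t ∩ Set.Iio α) ∨
      ((∀ β t, p.F β = some t → α < β → ¬IsLimitPt t α) ∧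
        otp s = Ordinal.omega0)))

namespace ModelClause

variable {p : SqCond} {ℳ : SqModel} {α β : Ordinal} {s t : Set Ordinal}

lemma of_sSup_ordTrace_lt (hT : BddAbove (ordTrace (ℳ : Set Hω₂)))
    (hα : sSup (ordTrace (ℳ : Set Hω₂)) < α) : ModelClause p α s ℳ := by
  have hnotin : α ∉ ordTrace (ℳ : Set Hω₂) := fun h => (le_csSup hT h).not_gt hα
  have hbelow : sSup (ordTrace (ℳ : Set Hω₂) ∩ Set.Iio α) < α :=
    (csSup_le' fun x hx => le_csSup hT hx.1).trans_lt hα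
  refine ⟨fun h => (hnotin h).elim, ?_, fun h => (h.2.2.trans hα).false.elim,
    fun h => (hbelow.ne h.2).elim⟩
  rintro (⟨-, h⟩ | ⟨h, -⟩)
  · exact (h.trans hα).false.elim
  · exact (hnotin h).elim

lemma addF (h : ModelClause p α t ℳ) (hβ : β ∉ p.dom) (hα : ¬IsLimitPt s α) :
    ModelClause (p.addF β s) α t ℳ := by
  have hext : (∃ β' t', p.F β' = some t' ∧ α < β' ∧ IsLimitPt t' α ∧ t = t' ∩ Set.Iio α) →
      ∃ β' t', (p.addF β s).F β' = some t' ∧ α < β' ∧ IsLimitPt t' α ∧ t = t' ∩ Set.Iio α :=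
    fun ⟨β', t', ht', hrest⟩ => ⟨β', t', (SqCond.le_addF hβ).1 β' t' ht', hrest⟩
  have hnolim : (∀ β' t', p.F β' = some t' → α < β' → ¬IsLimitPt t' α) →
      ∀ β' t', (p.addF β s).F β' = some t' → α < β' → ¬IsLimitPt t' α := by
    intro hold β' t' ht' hαβ'
    rcases SqCond.addF_F_eq_some.1 ht' with ⟨-, rfl⟩ | ⟨-, ht'⟩
    · exact hα
    · exact hold β' t' ht' hαβ'
  obtain ⟨h6a, h6b, h6c, h6d⟩ := h
  refine ⟨h6a, fun h => (h6b h).imp_right (SqCond.dom_subset_addF ·), fun h => ?_, fun h => ?_⟩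
  · exact (h6c h).imp hext (And.imp_left hnolim)
  · exact (h6d h).imp hext (And.imp_left hnolim)

end ModelClause

namespace SqValid

variable {E : Ordinal → Set (Set Ordinal)} {p : SqCond} {ℳ : SqModel} {α β γ : Ordinal}
  {s t : Set Ordinal}

lemma lt_of_mem (hp : SqValid E p) (ht : p.F α = some t) {x : Ordinal} (hx : x ∈ t) : x < α :=
  (hp.2.1 α t ht).2.2.1.1 x hx

lemma sSup_ordTrace_mem_dom (hp : SqValid E p) (hℳ : ℳ ∈ p.Mods) :
    sSup (ordTrace (ℳ : Set Hω₂)) ∈ p.dom :=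
  hp.2.2.1 (hp.2.2.2.2.2.1 ℳ hℳ).2

lemma bddAbove_ordTrace (hp : SqValid E p) (hℳ : ℳ ∈ p.Mods) :
    BddAbove (ordTrace (ℳ : Set Hω₂)) :=
  bddAbove_of_countable (ordTrace_countable (hp.2.2.2.2.2.1 ℳ hℳ).1.1)

lemma exists_support_lt (hp : SqValid E p) :
    ∃ γ < (Cardinal.aleph 2).ord, ∀ α ∈ p.support, α < γ := by
  obtain ⟨hdom, hF, -, -, -, -, -, -, -, hO, hOlt, -⟩ := hp
  refine exists_lt_forall_lt_of_finite (Cardinal.isSuccLimit_ord (Cardinal.aleph0_le_aleph 2))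
    (hdom.union (hO.image _)) ?_
  rintro α (hα | ⟨i, hi, rfl⟩)
  · obtain ⟨s, hs⟩ := Option.ne_none_iff_exists'.mp hα
    exact (hF α s hs).2.1
  · exact (hOlt i hi).2.1

lemma modelClause (hp : SqValid E p) (ht : p.F α = some t) (hℳ : ℳ ∈ p.Mods) :
    ModelClause p α t ℳ :=
  hp.2.2.2.2.2.2.2.2.1 α t ht ℳ hℳ

lemma isLimitPt_le (hp : SqValid E p) (ht : p.F α = some t) {μ : Ordinal}
    (hμ : IsLimitPt t μ) : μ ≤ α :=
  hμ.le_of_forall_lt fun _ => hp.lt_of_mem ht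

lemma addF_isLimitPt_coherent (hp : SqValid E p) (hdom : ∀ α ∈ p.dom, α < γ)
    (hsγ : ∀ x ∈ s, γ ≤ x) (α α' : Ordinal) (t t' : Set Ordinal)
    (ht : (p.addF β s).F α = some t) (ht' : (p.addF β s).F α' = some t') (hne : α ≠ α')
    (μ : Ordinal) (hμ : IsLimitPt t μ) (hμ' : IsLimitPt t' μ) :
    t ∩ Set.Iio μ = t' ∩ Set.Iio μ := by
  have hold : ∀ α t, p.F α = some t → IsLimitPt t μ → μ < γ := fun α t ht hμ =>
    (hp.isLimitPt_le ht hμ).trans_lt (hdom α (SqCond.mem_dom ht))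
  have hnew : IsLimitPt s μ → γ < μ := fun hμ => hμ.lt_of_forall_le hsγ
  rcases SqCond.addF_F_eq_some.1 ht with ⟨rfl, rfl⟩ | ⟨-, hpt⟩ <;>
    rcases SqCond.addF_F_eq_some.1 ht' with ⟨rfl, rfl⟩ | ⟨-, hpt'⟩
  · exact absurd rfl hne
  · exact ((hold _ _ hpt' hμ').trans (hnew hμ)).false.elim
  · exact ((hold _ _ hpt hμ).trans (hnew hμ')).false.elim
  · exact hp.2.2.2.2.2.2.1 α α' t t' hpt hpt' hne μ hμ hμ'

lemma addF (hp : SqValid E p) (hγ : ∀ α ∈ p.support, α < γ) (hγβ : γ ≤ β)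
    (hsγ : ∀ x ∈ s, γ ≤ x) (hβ : β ≠ 0 ∧ ∀ a < β, succ a < β)
    (hβω₂ : β < (Cardinal.aleph 2).ord) (hβcof : β.cof ≠ Cardinal.aleph 1)
    (hs : IsClubIn s β) (hsotp : otp s ≤ (Cardinal.aleph 1).ord) :
    SqValid E (p.addF β s) := by
  have hdom : ∀ α ∈ p.dom, α < γ := fun α h => hγ α (Or.inl h)
  have hβdom : β ∉ p.dom := fun h => (hdom β h).not_ge hγβ
  obtain ⟨hdomfin, hF, hSdom, hScof, hMfin, hM, -, hfin, -, hOfin, hO, hOM, hcompat⟩ := id hp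
  refine ⟨SqCond.dom_addF ▸ hdomfin.insert β, ?_, hSdom.trans SqCond.dom_subset_addF, ?_, hMfin,
    hM, hp.addF_isLimitPt_coherent hdom hsγ, ?_, ?_, hOfin, ?_, hOM, hcompat⟩
  · intro α t ht
    rcases SqCond.addF_F_eq_some.1 ht with ⟨rfl, rfl⟩ | ⟨-, ht⟩
    · exact ⟨hβ, hβω₂, hs, hsotp, fun h => absurd h hβcof⟩
    · obtain ⟨hlim, hω₂, hclub, hotp, hE⟩ := hF α t ht
      refine ⟨hlim, hω₂, hclub, hotp, fun h => ?_⟩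
      obtain ⟨C, hC, β', hβ', hβ'α, rfl⟩ := hE h
      exact ⟨C, hC, β', SqCond.dom_subset_addF hβ', hβ'α, rfl⟩
  · intro α hα hcof
    rw [SqCond.dom_addF] at hα
    rcases hα with rfl | hα
    · exact absurd hcof hβcof
    · exact hScof α hα hcof
  · intro α t ht σ hσ hσα
    rcases SqCond.addF_F_eq_some.1 ht with ⟨rfl, rfl⟩ | ⟨-, ht⟩
    · refine Set.finite_empty.subset fun x hx => ?_
      exact ((hdom σ (hSdom hσ)).trans_le (hsγ x hx.1)).not_gt hx.2
    · exact hfin α t ht σ hσ hσα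
  · intro α t ht ℳ hℳ
    rcases SqCond.addF_F_eq_some.1 ht with ⟨rfl, rfl⟩ | ⟨-, ht⟩
    · exact ModelClause.of_sSup_ordTrace_lt (hp.bddAbove_ordTrace hℳ)
        ((hdom _ (hp.sSup_ordTrace_mem_dom hℳ)).trans_le hγβ)
    · exact (hp.modelClause ht hℳ).addF hβdom fun hα =>
        (hdom α (SqCond.mem_dom ht)).not_gt (hα.lt_of_forall_le hsγ)
  · intro i hi
    obtain ⟨h1, h2, h3⟩ := hO i hi
    refine ⟨h1, h2, Set.eq_empty_of_forall_notMem ?_⟩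
    rw [SqCond.dom_addF]
    rintro x ⟨rfl | hx, hxi⟩
    · exact ((hxi.2.trans_lt (hγ i.2 (Or.inr ⟨i, hi, rfl⟩))).trans_le hγβ).false
    · exact Set.eq_empty_iff_forall_notMem.1 h3 x ⟨hx, hxi⟩

lemma addF_Ico {δ : Ordinal} (hp : SqValid E p) (hγ : ∀ α ∈ p.support, α < γ) (hγω₂ : γ < (Cardinal.aleph 2).ord)
    (hγδ : γ ≤ δ) (hδ : δ < γ + Ordinal.omega0) :
    SqValid E (p.addF (γ + Ordinal.omega0) (Set.Ico δ (γ + Ordinal.omega0))) := by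
  have hlim : IsSuccLimit (γ + Ordinal.omega0) :=
    Ordinal.isSuccLimit_add γ Ordinal.isSuccLimit_omega0
  refine hp.addF hγ le_self_add (fun x hx => hγδ.trans hx.1)
    ⟨hlim.ne_bot, fun _ => hlim.succ_lt⟩ ?_ ?_ (isClubIn_Ico hδ hlim)
    (otp_lt_of_countable ((countable_Ico_add_omega0 γ).mono (Set.Ico_subset_Ico_left hγδ))).le
  · exact Ordinal.isPrincipal_add_ord (Cardinal.aleph0_le_aleph 2) hγω₂
      (Cardinal.omega0_lt_ord.2 (Cardinal.aleph0_lt_aleph.2 two_pos))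
  · rw [Ordinal.cof_add γ Ordinal.omega0_ne_zero, Ordinal.cof_omega0]
    exact Cardinal.aleph0_lt_aleph_one.ne

end SqValid

theorem sq_forcing_separative_general (E : Ordinal → Set (Set Ordinal))
    (p : SqCond) (hp : SqValid E p) :
    ∃ q r : SqCond, SqValid E q ∧ SqValid E r ∧ SqLe p q ∧ SqLe p r ∧
      ¬∃ t : SqCond, SqValid E t ∧ SqLe q t ∧ SqLe r t := by
  obtain ⟨γ, hγω₂, hγ⟩ := hp.exists_support_lt
  set β := γ + Ordinal.omega0
  have hβ : IsSuccLimit β := Ordinal.isSuccLimit_add γ Ordinal.isSuccLimit_omega0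
  have hγβ : γ < β := lt_add_of_pos_right γ Ordinal.omega0_pos
  have hβdom : β ∉ p.dom := fun h => (hγ β (Or.inl h)).not_gt hγβ
  refine ⟨p.addF β (Set.Ico γ β), p.addF β (Set.Ioo γ β), hp.addF_Ico hγ hγω₂ le_rfl hγβ, ?_,
    SqCond.le_addF hβdom, SqCond.le_addF hβdom, ?_⟩
  · rw [← Order.Ico_succ_left]
    exact hp.addF_Ico hγ hγω₂ (le_succ γ) (hβ.succ_lt hγβ)
  · rintro ⟨t, -, hq, hr⟩
    have hclubs : Set.Ico γ β = Set.Ioo γ β := Option.some_injective _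
      ((SqCond.F_eq_of_addF_le hq).symm.trans (SqCond.F_eq_of_addF_le hr))
    exact (hclubs ▸ Set.left_mem_Ico.2 hγβ : γ ∈ Set.Ioo γ β).1.false

/-- The forcing notion `P` of Definition 4.3 is separative: every
condition has two incompatible extensions. -/
theorem sq_forcing_separative (E : Ordinal → Set (Set Ordinal)) (hE : GoodE E)
    (p : SqCond) (hp : SqValid E p) :
    ∃ q r : SqCond, SqValid E q ∧ SqValid E r ∧ SqLe p q ∧ SqLe p r ∧
      ¬∃ t : SqCond, SqValid E t ∧ SqLe q t ∧ SqLe r t :=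
  sq_forcing_separative_general E p hp

end
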